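/- Let $p \ge 2$, $\lambda \in \{-1,1\}$, $\tau > 0$, and let $u, v \in \mathbb{R}$ satisfy $(p-1)\tau|u|^{p-1} \le 1/2$ and $(p-1)\tau|v|^{p-1} \le 1/2$. Define $\mathcal{D}_\tau(w) = \frac{1}{\tau}\left(w(1-(p-1)\lambda\tau|w|^{p-1})^{-1/(p-1)} - w\right)$. Then there exists a constant $c_p > 0$, depending only on $p$, such that $\left|\mathcal{D}_\tau(u) - \mathcal{D}_\tau(v)\right| \le c_p\,|u-v|\,(|u|^{p-1} + |v|^{p-1})$. -/
import Mathlib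
open Real

-- Lipschitz bound for t ↦ t^(-q) on [1/2, ∞), 0 < q ≤ 1
lemma lip_neg {q : ℝ} (hq0 : 0 < q) (hq1 : q ≤ 1) {x y : ℝ} (hx : (1:ℝ)/2 ≤ x)
    (hy : (1:ℝ)/2 ≤ y) : |x ^ (-q) - y ^ (-q)| ≤ 4 * |x - y| := by
  have key := Convex.norm_image_sub_le_of_norm_hasDerivWithin_le
    (f := fun t : ℝ => t ^ (-q)) (f' := fun t : ℝ => (-q) * t ^ (-q - 1))
    (s := Set.Ici (1/2:ℝ)) (C := 4) ?_ ?_ (convex_Ici _) hy hx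
  · simpa [Real.norm_eq_abs] using key
  · intro t ht
    have ht0 : t ≠ 0 := by
      have : (0:ℝ) < t := lt_of_lt_of_le (by norm_num) ht
      exact ne_of_gt this
    exact (Real.hasDerivAt_rpow_const (Or.inl ht0)).hasDerivWithinAt
  · intro t ht
    have ht0 : (0:ℝ) < t := lt_of_lt_of_le (by norm_num) ht
    have h1 : t ^ (-q - 1) = (t ^ (q + 1))⁻¹ := by
      rw [show -q - 1 = -(q+1) by ring, Real.rpow_neg ht0.le]
    have h2 : (1/4 : ℝ) ≤ t ^ (q + 1) := by
      have e1 : ((1:ℝ)/2) ^ ((2:ℕ):ℝ) = 1/4 := by rw [Real.rpow_natCast]; norm_num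
      have e2 : ((1:ℝ)/2) ^ ((2:ℕ):ℝ) ≤ ((1:ℝ)/2) ^ (q + 1) :=
        Real.rpow_le_rpow_of_exponent_ge (by norm_num) (by norm_num) (by push_cast; linarith)
      have e3 : ((1:ℝ)/2) ^ (q + 1) ≤ t ^ (q + 1) :=
        Real.rpow_le_rpow (by norm_num) ht (by positivity)
      linarith [e1 ▸ e2, e3]
    have h3 : t ^ (-q - 1) ≤ 4 := by
      rw [h1]
      have h4 : (0:ℝ) < t ^ (q+1) := by positivity
      rw [inv_le_comm₀ (by positivity) (by norm_num)]
      linarith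
    have h5 : 0 ≤ t ^ (-q - 1) := Real.rpow_nonneg ht0.le _
    have : ‖-q * t ^ (-q - 1)‖ = q * t ^ (-q - 1) := by
      rw [norm_mul, Real.norm_eq_abs, Real.norm_eq_abs, abs_of_nonneg h5,
        abs_of_neg (by linarith : -q < 0)]
      ring
    rw [this]
    calc q * t ^ (-q - 1) ≤ 1 * 4 := mul_le_mul hq1 h3 h5 (by norm_num)
    _ = 4 := by norm_num

-- |a^r - b^r| ≤ r * M^(r-1) * |a - b| for a,b ∈ [0, M], M = max a b, r ≥ 1
lemma pow_lip {r : ℝ} (hr : 1 ≤ r) {a b : ℝ} (ha : 0 ≤ a) (hb : 0 ≤ b) :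
    |a ^ r - b ^ r| ≤ r * (max a b) ^ (r - 1) * |a - b| := by
  set M := max a b with hM
  have hM0 : 0 ≤ M := le_trans ha (le_max_left _ _)
  have key := Convex.norm_image_sub_le_of_norm_hasDerivWithin_le
    (f := fun t : ℝ => t ^ r) (f' := fun t : ℝ => r * t ^ (r - 1))
    (s := Set.Icc (0:ℝ) M) (C := r * M ^ (r - 1)) ?_ ?_ (convex_Icc _ _)
    ⟨hb, le_max_right _ _⟩ ⟨ha, le_max_left _ _⟩
  · simpa [Real.norm_eq_abs] using key
  · intro t ht
    exact (Real.hasDerivAt_rpow_const (Or.inr hr)).hasDerivWithinAt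
  · intro t ht
    have h1 : t ^ (r - 1) ≤ M ^ (r - 1) := Real.rpow_le_rpow ht.1 ht.2 (by linarith)
    have h2 : 0 ≤ t ^ (r - 1) := Real.rpow_nonneg ht.1 _
    rw [Real.norm_eq_abs, abs_mul, abs_of_nonneg (by linarith : (0:ℝ) ≤ r), abs_of_nonneg h2]
    exact mul_le_mul_of_nonneg_left h1 (by linarith)

theorem stmt_9 (p : ℝ) (hp : 2 ≤ p) :
    ∃ c > (0 : ℝ), ∀ lam τ u v : ℝ, (lam = -1 ∨ lam = 1) → 0 < τ →
      (p - 1) * τ * |u| ^ (p - 1) ≤ 1 / 2 → (p - 1) * τ * |v| ^ (p - 1) ≤ 1 / 2 →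
      |(1 / τ) * (u * (1 - (p - 1) * lam * τ * |u| ^ (p - 1)) ^ (-(1 / (p - 1))) - u) -
          (1 / τ) * (v * (1 - (p - 1) * lam * τ * |v| ^ (p - 1)) ^ (-(1 / (p - 1))) - v)| ≤
        c * |u - v| * (|u| ^ (p - 1) + |v| ^ (p - 1)) := by
  have hr : (1:ℝ) ≤ p - 1 := by linarith
  have hq0 : 0 < 1 / (p - 1) := by positivity
  have hq1 : 1 / (p - 1) ≤ 1 := by
    rw [div_le_one (by linarith)]; linarith
  refine ⟨4 * (p - 1) + 4 * (p - 1) * (p - 1), by nlinarith, ?_⟩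
  intro lam τ u v hlam hτ hu hv
  set q := 1 / (p - 1) with hq
  set pu := |u| ^ (p - 1) with hpu
  set pv := |v| ^ (p - 1) with hpv
  have hpu0 : 0 ≤ pu := Real.rpow_nonneg (abs_nonneg u) _
  have hpv0 : 0 ≤ pv := Real.rpow_nonneg (abs_nonneg v) _
  have hlam1 : |lam| = 1 := by rcases hlam with h | h <;> simp [h]
  set A := 1 - (p - 1) * lam * τ * pu with hA
  set B := 1 - (p - 1) * lam * τ * pv with hB
  have hsu0 : 0 ≤ (p - 1) * τ * pu := by positivity
  have hsv0 : 0 ≤ (p - 1) * τ * pv := by positivity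
  have habsu : |(p - 1) * lam * τ * pu| = (p - 1) * τ * pu := by
    rw [abs_mul, abs_mul, abs_mul, hlam1, abs_of_nonneg (by linarith : (0:ℝ) ≤ p - 1),
      abs_of_pos hτ, abs_of_nonneg hpu0]; ring
  have habsv : |(p - 1) * lam * τ * pv| = (p - 1) * τ * pv := by
    rw [abs_mul, abs_mul, abs_mul, hlam1, abs_of_nonneg (by linarith : (0:ℝ) ≤ p - 1),
      abs_of_pos hτ, abs_of_nonneg hpv0]; ring
  have hA2 : (1:ℝ)/2 ≤ A := by
    have := abs_le.mp (habsu ▸ hu : |(p - 1) * lam * τ * pu| ≤ 1/2)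
    rw [hA]; linarith [this.2]
  have hB2 : (1:ℝ)/2 ≤ B := by
    have := abs_le.mp (habsv ▸ hv : |(p - 1) * lam * τ * pv| ≤ 1/2)
    rw [hB]; linarith [this.2]
  -- bound on |A^(-q) - 1|
  have hA1 : |A ^ (-q) - 1| ≤ 4 * ((p - 1) * τ * pu) := by
    have h := lip_neg hq0 hq1 hA2 (by norm_num : (1:ℝ)/2 ≤ 1)
    rw [Real.one_rpow] at h
    calc |A ^ (-q) - 1| ≤ 4 * |A - 1| := h
    _ = 4 * ((p - 1) * τ * pu) := by
        rw [show A - 1 = -((p - 1) * lam * τ * pu) by rw [hA]; ring, abs_neg, habsu]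
  -- bound on |A^(-q) - B^(-q)|
  have hAB : |A ^ (-q) - B ^ (-q)| ≤ 4 * ((p - 1) * τ * |pu - pv|) := by
    calc |A ^ (-q) - B ^ (-q)| ≤ 4 * |A - B| := lip_neg hq0 hq1 hA2 hB2
    _ = 4 * ((p - 1) * τ * |pu - pv|) := by
        rw [show A - B = (p - 1) * lam * τ * (pv - pu) by rw [hA, hB]; ring]
        rw [abs_mul, abs_mul, abs_mul, hlam1, abs_of_nonneg (by linarith : (0:ℝ) ≤ p - 1),
          abs_of_pos hτ, abs_sub_comm pv pu]
        ring
  -- bound |v| * |pu - pv| ≤ (p-1) * |u-v| * (pu + pv)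
  have hD : |v| * |pu - pv| ≤ (p - 1) * |u - v| * (pu + pv) := by
    have hkey := pow_lip hr (abs_nonneg u) (abs_nonneg v)
    set M := max |u| |v| with hM
    have hM0 : 0 ≤ M := le_trans (abs_nonneg u) (le_max_left _ _)
    have hMr : M ^ (p - 1 - 1) * M ≤ pu + pv := by
      rcases eq_or_lt_of_le hM0 with h0 | h0
      · rw [← h0]; simp; positivity
      · have hMM : M ^ (p - 1 - 1) * M = M ^ (p - 1) := by
          rw [← Real.rpow_add_one (ne_of_gt h0)]; congr 1; ring
        rw [hMM]
        rcases max_choice |u| |v| with h | h <;> rw [hM, h]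
        · rw [← hpu]; linarith
        · rw [← hpv]; linarith
    have huv : |(|u| - |v|)| ≤ |u - v| := abs_abs_sub_abs_le_abs_sub u v
    have hvM : |v| ≤ M := le_max_right _ _
    have hMr1 : 0 ≤ M ^ (p - 1 - 1) := Real.rpow_nonneg hM0 _
    calc |v| * |pu - pv| ≤ |v| * ((p - 1) * M ^ (p - 1 - 1) * |(|u| - |v|)|) :=
          mul_le_mul_of_nonneg_left hkey (abs_nonneg v)
    _ ≤ M * ((p - 1) * M ^ (p - 1 - 1) * |u - v|) := by
        apply mul_le_mul hvM _ (by positivity) hM0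
        exact mul_le_mul_of_nonneg_left huv (by positivity)
    _ = (p - 1) * |u - v| * (M ^ (p - 1 - 1) * M) := by ring
    _ ≤ (p - 1) * |u - v| * (pu + pv) :=
        mul_le_mul_of_nonneg_left hMr (by positivity)
  -- main computation
  have hrw : (1 / τ) * (u * A ^ (-q) - u) - (1 / τ) * (v * B ^ (-q) - v)
      = (1 / τ) * ((u - v) * (A ^ (-q) - 1) + v * (A ^ (-q) - B ^ (-q))) := by ring
  rw [show -(1 / (p-1)) = -q from rfl]
  rw [hrw, abs_mul, abs_of_pos (by positivity : (0:ℝ) < 1/τ)]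
  have hstep : |(u - v) * (A ^ (-q) - 1) + v * (A ^ (-q) - B ^ (-q))|
      ≤ |u - v| * (4 * ((p - 1) * τ * pu)) + |v| * (4 * ((p - 1) * τ * |pu - pv|)) := by
    calc |(u - v) * (A ^ (-q) - 1) + v * (A ^ (-q) - B ^ (-q))|
        ≤ |(u - v) * (A ^ (-q) - 1)| + |v * (A ^ (-q) - B ^ (-q))| := abs_add_le _ _
    _ = |u - v| * |A ^ (-q) - 1| + |v| * |A ^ (-q) - B ^ (-q)| := by
        rw [abs_mul, abs_mul]
    _ ≤ _ := by
        gcongr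
  have hτ' : τ ≠ 0 := ne_of_gt hτ
  calc (1/τ) * |(u - v) * (A ^ (-q) - 1) + v * (A ^ (-q) - B ^ (-q))|
      ≤ (1/τ) * (|u - v| * (4 * ((p - 1) * τ * pu)) + |v| * (4 * ((p - 1) * τ * |pu - pv|))) :=
        mul_le_mul_of_nonneg_left hstep (by positivity)
  _ = 4 * (p - 1) * (|u - v| * pu) + 4 * (p - 1) * (|v| * |pu - pv|) := by
      field_simp
  _ ≤ 4 * (p - 1) * (|u - v| * (pu + pv)) + 4 * (p - 1) * ((p - 1) * |u - v| * (pu + pv)) := by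
      nlinarith [hD, mul_nonneg (abs_nonneg (u - v)) hpv0, hr]
  _ = (4 * (p - 1) + 4 * (p - 1) * (p - 1)) * |u - v| * (pu + pv) := by ring
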